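/- arXiv:1410.7693 — 2 statements merged into one kernel-verified Lean document; each statement's English description precedes it below -/
import Mathlib

section
/- Translating a tiling of a region by a vector b ∈ Z^3 does not change its u-pretwist: if t is a tiling of a region R and f(p) = p + b with b ∈ Z^3, then T^u(f(t)) = T^u(t) for every u ∈ Φ. -/
open scoped BigOperators
noncomputable section

/-- Points of `ℝ³`. -/
abbrev R3 := Fin 3 → ℝ

/-- Euclidean inner product on `ℝ³`. -/
def dot (x y : R3) : ℝ := ∑ i, x i * y i

/-- Determinant of the 3×3 matrix with rows `a`, `b`, `c`. -/
def det3 (a b c : R3) : ℝ := Matrix.det (Matrix.of ![a, b, c])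

/-- The canonical basis vectors of `ℝ³`. -/
def stdR (i : Fin 3) : R3 := fun j => if j = i then 1 else 0

/-- `Φ`, the set of signed canonical basis vectors. -/
def PhiR : Set R3 := {u | ∃ i : Fin 3, u = stdR i ∨ u = -stdR i}

/-- A positively oriented basis with vectors in `Φ`. -/
def IsLatticeBasis (b1 b2 b3 : R3) : Prop :=
  b1 ∈ PhiR ∧ b2 ∈ PhiR ∧ b3 ∈ PhiR ∧ det3 b1 b2 b3 = 1

/-- The basic (closed unit) cube with least corner `q ∈ ℤ³`. -/
def cubeSet (q : Fin 3 → ℤ) : Set R3 := {x | ∀ i, (q i : ℝ) ≤ x i ∧ x i ≤ q i + 1}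

/-- The center of the basic cube with corner `q`. -/
def cubeCenter (q : Fin 3 → ℤ) : R3 := fun i => (q i : ℝ) + 1/2

/-- A basic cube is black when the coordinate sum of its corner is odd. -/
def cubeBlack (q : Fin 3 → ℤ) : Prop := Odd (q 0 + q 1 + q 2)

instance : DecidablePred cubeBlack := fun q => by unfold cubeBlack; infer_instance

/-- Color of a basic cube: `1` for black, `-1` for white. -/
def col (q : Fin 3 → ℤ) : ℤ := if cubeBlack q then 1 else -1

/-- A region, given as a finite set of basic cubes (identified by corners),
realized as a subset of `ℝ³`. -/
def regionSet (R : Finset (Fin 3 → ℤ)) : Set R3 := ⋃ q ∈ R, cubeSet q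

/-- A domino brick: two basic cubes sharing a face. -/
structure Domino where
  c1 : Fin 3 → ℤ
  c2 : Fin 3 → ℤ
  adj : (∑ i, |c1 i - c2 i|) = 1

instance : DecidableEq Domino := fun d e =>
  decidable_of_iff (d.c1 = e.c1 ∧ d.c2 = e.c2) (by cases d; cases e; simp)

/-- The two cubes of a domino. -/
def Domino.cubes (d : Domino) : Finset (Fin 3 → ℤ) := {d.c1, d.c2}

/-- The domino as a subset of `ℝ³`. -/
def Domino.toSet (d : Domino) : Set R3 := cubeSet d.c1 ∪ cubeSet d.c2

/-- `v(d)`: the center of the black cube minus the center of the white cube. -/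
def Domino.v (d : Domino) : R3 :=
  if cubeBlack d.c1 then (fun i => (d.c1 i : ℝ) - d.c2 i) else (fun i => (d.c2 i : ℝ) - d.c1 i)

/-- Two dominoes are the same up to the (irrelevant) ordering of their cubes. -/
def Domino.same (d e : Domino) : Prop :=
  (d.c1 = e.c1 ∧ d.c2 = e.c2) ∨ (d.c1 = e.c2 ∧ d.c2 = e.c1)

/-- The open `u`-shade of a set `X ⊆ ℝ³`. -/
def shade (u : R3) (X : Set R3) : Set R3 :=
  interior ({y | ∃ x ∈ X, ∃ s : ℝ, 0 ≤ s ∧ y = x + s • u} \ X)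

/-- The effect of the domino `d0` on the domino `d1` along `u`. -/
def tau (u : R3) (d0 d1 : Domino) : ℝ :=
  open scoped Classical in
  if (d1.toSet ∩ shade u d0.toSet).Nonempty then (1/4) * det3 d1.v d0.v u else 0

/-- The `u`-pretwist of a (finite set of) dominoes. -/
def T (u : R3) (t : Finset Domino) : ℝ := ∑ d0 ∈ t, ∑ d1 ∈ t, tau u d0 d1

/-- `t` is a tiling of the region `R`: every domino lies in `R` and every cube
of `R` is covered by exactly one domino of `t`. -/
def IsTiling (R : Finset (Fin 3 → ℤ)) (t : Finset Domino) : Prop :=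
  (∀ d ∈ t, d.c1 ∈ R ∧ d.c2 ∈ R) ∧
  ∀ q ∈ R, ∃! d, d ∈ t ∧ (q = d.c1 ∨ q = d.c2)

/-- Translation of a domino by an integer vector. -/
def Domino.translate (d : Domino) (b : Fin 3 → ℤ) : Domino :=
  ⟨fun i => d.c1 i + b i, fun i => d.c2 i + b i, by
    have h : ∀ i : Fin 3, |d.c1 i + b i - (d.c2 i + b i)| = |d.c1 i - d.c2 i| := by
      intro i; ring_nf
    rw [Finset.sum_congr rfl fun i _ => h i]; exact d.adj⟩

/-- Reflection of a cube in the hyperplane `x_k = 0`. -/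
def reflCube (k : Fin 3) (q : Fin 3 → ℤ) : Fin 3 → ℤ :=
  fun i => if i = k then -q i - 1 else q i

/-- Reflection of a domino in the hyperplane `x_k = 0`. -/
def Domino.reflect (d : Domino) (k : Fin 3) : Domino :=
  ⟨reflCube k d.c1, reflCube k d.c2, by
    have h : ∀ i : Fin 3, |reflCube k d.c1 i - reflCube k d.c2 i| = |d.c1 i - d.c2 i| := by
      intro i
      by_cases hik : i = k
      · simp only [reflCube, if_pos hik]
        have h2 : -d.c1 i - 1 - (-d.c2 i - 1) = -(d.c1 i - d.c2 i) := by ring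
        rw [h2, abs_neg]
      · simp [reflCube, hik]
    rw [Finset.sum_congr rfl fun i _ => h i]; exact d.adj⟩

/-- A signed-permutation rotation applied to a basic cube (acting on centers by
`y i = ε i * x (σ i)` and recording the new least corner). -/
def rotCube (σ : Equiv.Perm (Fin 3)) (ε : Fin 3 → ℤ) (q : Fin 3 → ℤ) : Fin 3 → ℤ :=
  fun i => if ε i = 1 then q (σ i) else -q (σ i) - 1

/-- A signed-permutation rotation applied to a domino. -/
def Domino.rot (d : Domino) (σ : Equiv.Perm (Fin 3)) (ε : Fin 3 → ℤ) : Domino :=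
  ⟨rotCube σ ε d.c1, rotCube σ ε d.c2, by
    have h : ∀ i : Fin 3, |rotCube σ ε d.c1 i - rotCube σ ε d.c2 i|
        = |d.c1 (σ i) - d.c2 (σ i)| := by
      intro i
      by_cases hi : ε i = 1
      · simp [rotCube, hi]
      · simp only [rotCube, if_neg hi]
        have h2 : -d.c1 (σ i) - 1 - (-d.c2 (σ i) - 1) = -(d.c1 (σ i) - d.c2 (σ i)) := by ring
        rw [h2, abs_neg]
    rw [Finset.sum_congr rfl fun i _ => h i]
    rw [Equiv.sum_comp σ (fun j => |d.c1 j - d.c2 j|)]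
    exact d.adj⟩

/-- Auxiliary constructor for dominoes. -/
def mkDom (p q : Fin 3 → ℤ) (h : (∑ i, |p i - q i|) = 1) : Domino := ⟨p, q, h⟩

/-- The three dominoes removed by the canonical positive trit. -/
def tritPre : Fin 3 → Domino
  | 0 => mkDom ![0,0,0] ![0,0,1] (by decide)
  | 1 => mkDom ![0,1,1] ![1,1,1] (by decide)
  | 2 => mkDom ![1,0,0] ![1,1,0] (by decide)

/-- The three dominoes placed back by the canonical positive trit. -/
def tritPost : Fin 3 → Domino
  | 0 => mkDom ![0,0,0] ![1,0,0] (by decide)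
  | 1 => mkDom ![0,0,1] ![0,1,1] (by decide)
  | 2 => mkDom ![1,1,0] ![1,1,1] (by decide)

/-- `t1` is obtained from `t0` by a flip: two dominoes of `t0` occupying a
`2×2×1` slab are replaced by the two other dominoes filling the same slab. -/
def IsFlip (t0 t1 : Finset Domino) : Prop :=
  ∃ d0 d0' d1 d1' : Domino, d0 ∈ t0 ∧ d0' ∈ t0 ∧ d0 ≠ d0' ∧
    d1 ∈ t1 ∧ d1' ∈ t1 ∧ d1 ≠ d1' ∧
    t0 \ {d0, d0'} = t1 \ {d1, d1'} ∧
    ({d0, d0'} : Finset Domino) ≠ {d1, d1'} ∧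
    d0.cubes ∪ d0'.cubes = d1.cubes ∪ d1'.cubes

/-- `t1` is obtained from `t0` by a positive trit: up to an orientation preserving
lattice isometry, three dominoes of `t0` in the canonical pre-trit position are
replaced by the three dominoes in the canonical post-trit position. -/
def IsPositiveTrit (t0 t1 : Finset Domino) : Prop :=
  ∃ (σ : Equiv.Perm (Fin 3)) (ε : Fin 3 → ℤ) (b : Fin 3 → ℤ),
    (∀ i, ε i = 1 ∨ ε i = -1) ∧
    ((∏ i, ε i) : ℤ) * (Equiv.Perm.sign σ : ℤ) = 1 ∧
    ∃ a : Fin 3 → Domino, ∃ a' : Fin 3 → Domino,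
      (∀ j, a j ∈ t0) ∧ (∀ j, a' j ∈ t1) ∧
      (∀ j, (a j).same (((tritPre j).rot σ ε).translate b)) ∧
      (∀ j, (a' j).same (((tritPost j).rot σ ε).translate b)) ∧
      t0 \ {a 0, a 1, a 2} = t1 \ {a' 0, a' 1, a' 2}

/-- A cube `q` lies in the closed shade, in the direction `±e_k` (sign `sgn`),
of the 2×2 square with normal `e_k` and corner `p` (at height `p k`). -/
def inShade (k : Fin 3) (sgn : Bool) (p q : Fin 3 → ℤ) : Prop :=
  (∀ j, j ≠ k → q j = p j ∨ q j = p j + 1) ∧ (if sgn then p k ≤ q k else q k < p k)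

instance (k : Fin 3) (sgn : Bool) (p q : Fin 3 → ℤ) : Decidable (inShade k sgn p q) := by
  unfold inShade; infer_instance

/-- The 2×2 square with normal `e_k`, corner `p`, at height `p k`
is contained in the region `R`. -/
def squareInRegion (R : Finset (Fin 3 → ℤ)) (k : Fin 3) (p : Fin 3 → ℤ) : Prop :=
  ∀ q : Fin 3 → ℤ, (∀ j, j ≠ k → q j = p j ∨ q j = p j + 1) → q k = p k →
    q ∈ R ∨ Function.update q k (p k - 1) ∈ R

/-- `R` is fully balanced with respect to the directions `±e_k`. -/
def FullyBalancedWrt (R : Finset (Fin 3 → ℤ)) (k : Fin 3) : Prop :=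
  ∀ p : Fin 3 → ℤ, squareInRegion R k p →
    (∑ q ∈ R, if inShade k true p q then col q else 0) = 0 ∧
    (∑ q ∈ R, if inShade k false p q then col q else 0) = 0

/-- `R` is a pseudocylinder with axis `e_k` and depth `n`: a planar region with
connected interior, thickened `n` layers in the direction `e_k`. -/
def IsPseudocylinder (R : Finset (Fin 3 → ℤ)) (k : Fin 3) (n : ℕ) : Prop :=
  0 < n ∧
  (∀ q ∈ R, 0 ≤ q k ∧ q k < n) ∧
  (∀ q ∈ R, ∀ m : ℤ, 0 ≤ m → m < n → Function.update q k m ∈ R) ∧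
  R.Nonempty ∧
  IsConnected (interior (regionSet (R.filter (fun q => q k = 0))))

/-- A cylinder: a pseudocylinder whose base is simply connected. -/
def IsCylinder (R : Finset (Fin 3 → ℤ)) (k : Fin 3) (n : ℕ) : Prop :=
  IsPseudocylinder R k n ∧
  SimplyConnectedSpace (interior (regionSet (R.filter (fun q => q k = 0))))

/-- A (lattice) segment: the unit straight path between the centers of two
face-adjacent basic cubes, from the center of the cube `a` to that of `b`. -/
structure Seg where
  a : Fin 3 → ℤ
  b : Fin 3 → ℤ
  adj : (∑ i, |a i - b i|) = 1

/-- The point of a segment at parameter `x ∈ [0,1]`. -/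
def Seg.pt (s : Seg) (x : ℝ) : R3 := fun i => (cubeCenter s.a i) + x * ((s.b i : ℝ) - s.a i)

/-- The direction `v(ℓ) = ℓ(1) - ℓ(0)` of a segment. -/
def Seg.vec (s : Seg) : R3 := fun i => (s.b i : ℝ) - s.a i

/-- A segment lies in a region if both its cubes do. -/
def Seg.inRegion (s : Seg) (R : Finset (Fin 3 → ℤ)) : Prop := s.a ∈ R ∧ s.b ∈ R

/-- A straight segment in `ℝ³`, with base point `p` and direction `v`. -/
structure RSeg where
  p : R3
  v : R3

/-- The point of an `RSeg` at parameter `x ∈ [0,1]`. -/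
def RSeg.pt (l : RSeg) (x : ℝ) : R3 := fun i => l.p i + x * l.v i

/-- Orientation reversal of an `RSeg`. -/
def RSeg.reverse (l : RSeg) : RSeg := ⟨fun i => l.p i + l.v i, fun i => -l.v i⟩

/-- Translation of an `RSeg`. -/
def RSeg.translate (l : RSeg) (u : R3) : RSeg := ⟨fun i => l.p i + u i, l.v⟩

/-- The `RSeg` underlying a lattice segment. -/
def Seg.toR (s : Seg) : RSeg := ⟨cubeCenter s.a, s.vec⟩

/-- The dimer of a domino: the segment from the white center to the black center. -/
def Domino.dimer (d : Domino) : RSeg :=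
  if cubeBlack d.c1 then ⟨cubeCenter d.c2, d.v⟩ else ⟨cubeCenter d.c1, d.v⟩

/-- The orthogonal projection onto the plane `u^⊥`. -/
def projO (u : R3) (x : R3) : R3 := fun i => x i - (dot x u) * u i

/-- The (slanted) projection onto `b3^⊥` with kernel spanned by `b3 + a·b1 + b·b2`. -/
def projSl (b1 b2 b3 : R3) (a b : ℝ) (x : R3) : R3 :=
  fun i => x i - (dot x b3) * (b3 i + a * b1 i + b * b2 i)

/-- The effect of segment `l0` on segment `l1` along `u` (orthogonal version). -/
def tauR (u : R3) (l0 l1 : RSeg) : ℝ :=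
  open scoped Classical in
  if ((∃ x0 ∈ Set.Icc (0:ℝ) 1, ∃ x1 ∈ Set.Icc (0:ℝ) 1,
        projO u (l0.pt x0) = projO u (l1.pt x1)) ∧ dot (l0.pt 0) u < dot (l1.pt 0) u)
  then (1/4) * det3 l1.v l0.v u else 0

/-- The slanted effect `τ^β_{a,b}(l0,l1)`. -/
def tauSl (b1 b2 b3 : R3) (a b : ℝ) (l0 l1 : RSeg) : ℝ :=
  open scoped Classical in
  if ((∃ x0 ∈ Set.Icc (0:ℝ) 1, ∃ x1 ∈ Set.Icc (0:ℝ) 1,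
        projSl b1 b2 b3 a b (l0.pt x0) = projSl b1 b2 b3 a b (l1.pt x1))
      ∧ dot (l0.pt 0) b3 < dot (l1.pt 0) b3)
  then det3 l1.v l0.v b3 else 0

/-- `T^u(A,B)` summed over two finite families of segments. -/
def Tfam {n m : ℕ} (u : R3) (A : Fin n → RSeg) (B : Fin m → RSeg) : ℝ :=
  ∑ k, ∑ l, tauR u (A k) (B l)

/-- The combinatorial linking number (along `u`) of two disjoint closed curves:
half the symmetrized sum of effects. -/
def LinkAlong {n m : ℕ} (u : R3) (A : Fin n → RSeg) (B : Fin m → RSeg) : ℝ :=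
  (Tfam u A B + Tfam u B A) / 2

/-- The `u`-pretwist of a tiling, computed via dimers. -/
def Tdim (u : R3) (t : Finset Domino) : ℝ := ∑ d0 ∈ t, ∑ d1 ∈ t, tauR u d0.dimer d1.dimer

/-- A closed curve given by a cyclic list of segments. -/
def IsClosedCurve {n : ℕ} (γ : Fin n → RSeg) : Prop :=
  2 ≤ n ∧ ∀ k : Fin n,
    (γ k).pt 1 = (γ ⟨(k.val + 1) % n, Nat.mod_lt _ k.pos⟩).pt 0

/-- A closed curve is simple when its vertices are pairwise distinct. -/
def IsSimpleCurve {n : ℕ} (γ : Fin n → RSeg) : Prop :=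
  Function.Injective (fun k : Fin n => (γ k).pt 0)

/-- The (cyclically) next segment of a curve. -/
def nextSeg {n : ℕ} (hn : 0 < n) (γ : Fin n → RSeg) (k : Fin n) : RSeg :=
  γ ⟨(k.val + 1) % n, Nat.mod_lt _ hn⟩

/-- Adjacency of basic cubes. -/
def cubeAdj (p q : Fin 3 → ℤ) : Prop := (∑ i, |p i - q i|) = 1

/-- The associated graph of a region: vertices are cubes, edges join
face-adjacent cubes. -/
def cubeGraph (R : Finset (Fin 3 → ℤ)) : SimpleGraph {q // q ∈ R} where
  Adj p q := cubeAdj p.val q.val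
  symm := by
    constructor
    intro p q h
    beta_reduce at h ⊢
    unfold cubeAdj at h ⊢
    rw [Finset.sum_congr rfl fun i _ => abs_sub_comm (q.val i) (p.val i)]
    exact h
  loopless := by constructor; intro p h; simp [cubeAdj] at h

/-- The prism `G × I_m` over a graph `G`: the product of `G` with a path. -/
def prism {V : Type*} (G : SimpleGraph V) (m : ℕ) : SimpleGraph (V × Fin m) where
  Adj a b := (a.1 = b.1 ∧ (a.2.val + 1 = b.2.val ∨ b.2.val + 1 = a.2.val))
    ∨ (G.Adj a.1 b.1 ∧ a.2 = b.2)
  symm := by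
    constructor
    intro a b h
    rcases h with ⟨h1, h2⟩ | ⟨h1, h2⟩
    · exact Or.inl ⟨h1.symm, h2.symm⟩
    · exact Or.inr ⟨h1.symm, h2.symm⟩
  loopless := by
    constructor
    intro a h
    rcases h with ⟨-, h2⟩ | ⟨h1, -⟩
    · omega
    · exact G.irrefl h1

/-- The turning indicator `η` of a curve at position `k`. -/
def eta {n : ℕ} (b2 b3 : R3) (γ : Fin n → RSeg) (k : Fin n) : ℝ :=
  open scoped Classical in
  if ((γ k).v = b2 ∧ (nextSeg k.pos γ k).v = b3)
      ∨ ((γ k).v = -b3 ∧ (nextSeg k.pos γ k).v = -b2) then 1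
  else if ((γ k).v = -b2 ∧ (nextSeg k.pos γ k).v = -b3)
      ∨ ((γ k).v = b3 ∧ (nextSeg k.pos γ k).v = b2) then -1
  else 0

/-- A box: a rectangular parallelepiped of basic cubes. -/
def IsBox (B : Finset (Fin 3 → ℤ)) : Prop :=
  ∃ lo hi : Fin 3 → ℤ, (∀ i, lo i < hi i) ∧ ∀ q, q ∈ B ↔ ∀ i, lo i ≤ q i ∧ q i < hi i
/-! Translating by `b` moves every domino, and hence every shade, by the same homeomorphism of
`ℝ³`, so the shade condition in `τ^u` is unchanged. If `b` has odd coordinate sum the translation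
swaps the two colours and reverses every `v(d)`, but `det3` is bilinear in the two vectors `v`, so
the sign cancels. -/

theorem Domino.translate_injective (b : Fin 3 → ℤ) :
    Function.Injective (fun d : Domino => d.translate b) := by
  rintro ⟨p, q, _⟩ ⟨p', q', _⟩ h
  simp only [Domino.translate, Domino.mk.injEq] at h ⊢
  exact ⟨funext fun i => by simpa using congrFun h.1 i, funext fun i => by simpa using congrFun h.2 i⟩

theorem cubeBlack_add (q b : Fin 3 → ℤ) :
    cubeBlack (fun i => q i + b i) ↔ (cubeBlack q ↔ ¬ cubeBlack b) := by
  simp only [cubeBlack, Int.odd_iff]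
  omega

theorem Domino.v_translate (d : Domino) (b : Fin 3 → ℤ) :
    (d.translate b).v = if cubeBlack b then -d.v else d.v := by
  have hc1 := cubeBlack_add d.c1 b
  simp only [Domino.v, Domino.translate] at hc1 ⊢
  by_cases hb : cubeBlack b <;> by_cases h1 : cubeBlack d.c1 <;>
    simp only [hb, h1, hc1, if_true, if_false, iff_true, iff_false, not_true, not_false_iff] <;>
    · funext i; push_cast [Pi.neg_apply]; ring

theorem det3_neg_neg (a c u : R3) : det3 (-a) (-c) u = det3 a c u := by
  simp [det3, Matrix.det_fin_three]

theorem det3_v_translate (d0 d1 : Domino) (b : Fin 3 → ℤ) (u : R3) :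
    det3 (d1.translate b).v (d0.translate b).v u = det3 d1.v d0.v u := by
  rw [Domino.v_translate, Domino.v_translate]
  split_ifs
  exacts [det3_neg_neg _ _ _, rfl]

theorem shade_image_add (u v : R3) (X : Set R3) :
    shade u ((· + v) '' X) = (· + v) '' shade u X := by
  have hray : {y | ∃ x ∈ (· + v) '' X, ∃ s : ℝ, 0 ≤ s ∧ y = x + s • u}
      = (· + v) '' {y | ∃ x ∈ X, ∃ s : ℝ, 0 ≤ s ∧ y = x + s • u} := by
    ext y
    constructor
    · rintro ⟨_, ⟨x, hx, rfl⟩, s, hs, rfl⟩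
      exact ⟨x + s • u, ⟨x, hx, s, hs, rfl⟩, add_right_comm _ _ _⟩
    · rintro ⟨_, ⟨x, hx, s, hs, rfl⟩, rfl⟩
      exact ⟨x + v, ⟨x, hx, rfl⟩, s, hs, add_right_comm _ _ _⟩
  rw [shade, shade, hray, ← Set.image_sdiff (add_left_injective v)]
  exact ((Homeomorph.addRight v).image_interior _).symm

theorem cubeSet_add (q b : Fin 3 → ℤ) :
    cubeSet (fun i => q i + b i) = (· + fun i => (b i : ℝ)) '' cubeSet q := by
  ext x
  simp only [cubeSet, Set.mem_image, Set.mem_ofPred_eq]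
  constructor
  · intro h
    refine ⟨fun i => x i - b i, fun i => ?_, funext fun i => by simp⟩
    have := h i; push_cast at this
    constructor <;> linarith [this.1, this.2]
  · rintro ⟨y, hy, rfl⟩ i
    have := hy i; push_cast
    constructor <;> simp only [Pi.add_apply] <;> linarith [this.1, this.2]

theorem Domino.toSet_translate (d : Domino) (b : Fin 3 → ℤ) :
    (d.translate b).toSet = (· + fun i => (b i : ℝ)) '' d.toSet := by
  rw [Domino.toSet, Domino.toSet, Set.image_union, ← cubeSet_add, ← cubeSet_add]
  rfl

theorem tau_translate (u : R3) (d0 d1 : Domino) (b : Fin 3 → ℤ) :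
    tau u (d0.translate b) (d1.translate b) = tau u d0 d1 := by
  have hmeet : ((d1.translate b).toSet ∩ shade u (d0.translate b).toSet).Nonempty
      ↔ (d1.toSet ∩ shade u d0.toSet).Nonempty := by
    rw [Domino.toSet_translate, Domino.toSet_translate, shade_image_add,
      ← Set.image_inter (add_left_injective _), Set.image_nonempty]
  classical
  simp only [tau, det3_v_translate]
  exact if_congr hmeet rfl rfl

theorem statement1_general (t : Finset Domino)
    (b : Fin 3 → ℤ) (u : R3) :
    T u (t.image (fun d => d.translate b)) = T u t := by
  have hinj := Domino.translate_injective b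
  simp only [T, Finset.sum_image hinj.injOn, tau_translate]

theorem statement1 (R : Finset (Fin 3 → ℤ)) (t : Finset Domino) (ht : IsTiling R t)
    (b : Fin 3 → ℤ) (u : R3) (hu : u ∈ PhiR) :
    T u (t.image (fun d => d.translate b)) = T u t :=
  statement1_general t b u
end
end

section
/- Let β = (β1,β2,β3) be a positively oriented basis of vectors from {±e1,±e2,±e3}, let R be a region of β3-length N, and 0 < |a|,|b| < 1/N. For two segments ℓ0, ℓ1 of R, the symmetrized slanted effect τ^β_{a,b}(ℓ0,ℓ1) + τ^β_{a,b}(ℓ1,ℓ0) is nonzero if and only if there exist s0,s1 ∈ [0,1] with ℓ0(s0) ≠ ℓ1(s1) and Π^β_{a,b}(ℓ0(s0)) = Π^β_{a,b}(ℓ1(s1)); moreover in that case the crossing is transversal with sign equal to τ^β_{a,b}(ℓ0,ℓ1) + τ^β_{a,b}(ℓ1,ℓ0). -/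
open scoped BigOperators
noncomputable section

/-!
The slanted projection identifies `x` and `y` exactly when `x - y = t • w`, where `t` is the
`β3`-height difference and `w = β3 + a β1 + b β2`. Every segment runs along some `±βk`.

If the two segments run along `β1` and `β2`, their heights `H0`, `H1` are constant, a crossing has
`ℓ1(s1) - ℓ0(s0) = (H1 - H0) • w`, and `det(v1, v0, ·) = det(v1, v0, β3) · (· ⬝ β3)`; so the sign of
the crossing is `det(v1, v0, β3) · sign(H1 - H0)`, which is exactly the symmetrized effect.

Otherwise some `u ∈ {β1, β2}` is orthogonal to both segments. Then `det(v1, v0, β3) = 0`, so both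
effects vanish, and at a crossing the integer `u ⬝ (x - y)` equals `t (u ⬝ w)` with `|t| ≤ N` and
`|u ⬝ w| ∈ {|a|, |b|}` smaller than `1 / N`; hence `t = 0` and `x = y`.
-/

open Set

lemma dot_comm (x y : R3) : dot x y = dot y x := dotProduct_comm x y

lemma dot_expand (x y : R3) : dot x y = x 0 * y 0 + x 1 * y 1 + x 2 * y 2 := by
  simp [dot, Fin.sum_univ_three]

lemma dot_add_left (x y z : R3) : dot (x + y) z = dot x z + dot y z := add_dotProduct x y z

lemma dot_sub_left (x y z : R3) : dot (x - y) z = dot x z - dot y z := sub_dotProduct x y z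

lemma dot_smul_left (c : ℝ) (x y : R3) : dot (c • x) y = c * dot x y := smul_dotProduct c x y

lemma dot_neg_left (x y : R3) : dot (-x) y = -dot x y := neg_dotProduct x y

lemma dot_neg_right (x y : R3) : dot x (-y) = -dot x y := dotProduct_neg x y

lemma stdR_dot (i : Fin 3) (v : R3) : dot (stdR i) v = v i := by
  simp [dot, stdR]

lemma dot_stdR (v : R3) (i : Fin 3) : dot v (stdR i) = v i := by
  rw [dot_comm, stdR_dot]

lemma det3_expand (u v w : R3) : det3 u v w =
    u 0 * (v 1 * w 2 - v 2 * w 1) - u 1 * (v 0 * w 2 - v 2 * w 0)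
      + u 2 * (v 0 * w 1 - v 1 * w 0) := by
  simp [det3, Matrix.det_fin_three]; ring

lemma det3_swap_left (u v w : R3) : det3 v u w = -det3 u v w := by
  simp only [det3_expand]; ring

lemma det3_swap_right (u v w : R3) : det3 u w v = -det3 u v w := by
  simp only [det3_expand]; ring

lemma det3_rotate (u v w : R3) : det3 v w u = det3 u v w := by
  simp only [det3_expand]; ring

lemma det3_neg_left (u v w : R3) : det3 (-u) v w = -det3 u v w := by
  simp only [det3_expand, Pi.neg_apply]; ring

lemma det3_neg_mid (u v w : R3) : det3 u (-v) w = -det3 u v w := by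
  simp only [det3_expand, Pi.neg_apply]; ring

lemma det3_zero_right (u v : R3) : det3 u v 0 = 0 := by
  simp [det3_expand]

/-- `det3 v w x = (v × w) ⬝ x`, and `v × w` is a multiple of the unit normal `u` of a plane
containing `v` and `w`. The coefficients below come from
`(c ⬝ x) (u ⬝ u) - (c ⬝ u) (u ⬝ x) = (v ⬝ u) (w ⬝ (x × u)) - (v ⬝ (x × u)) (w ⬝ u)` for `c = v × w`. -/
lemma det3_eq_mul_dot_of_orthogonal {u v w : R3} (hu : dot u u = 1) (hv : dot v u = 0)
    (hw : dot w u = 0) (x : R3) : det3 v w x = det3 v w u * dot x u := by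
  simp only [det3_expand, dot_expand] at *
  linear_combination
    (-(v 0 * (w 1 * x 2 - w 2 * x 1) - v 1 * (w 0 * x 2 - w 2 * x 0)
      + v 2 * (w 0 * x 1 - w 1 * x 0))) * hu
    + (w 0 * (x 1 * u 2 - x 2 * u 1) + w 1 * (x 2 * u 0 - x 0 * u 2)
      + w 2 * (x 0 * u 1 - x 1 * u 0)) * hv
    - (v 0 * (x 1 * u 2 - x 2 * u 1) + v 1 * (x 2 * u 0 - x 0 * u 2)
      + v 2 * (x 0 * u 1 - x 1 * u 0)) * hw

/-- Cramer's rule: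
`det3 b1 b2 b3 • v = (v ⬝ b1) (b2 × b3) + (v ⬝ b2) (b3 × b1) + (v ⬝ b3) (b1 × b2)`. -/
lemma exists_dot_ne_zero_of_det3_ne_zero {b1 b2 b3 v : R3} (hdet : det3 b1 b2 b3 ≠ 0)
    (hv : v ≠ 0) : dot v b1 ≠ 0 ∨ dot v b2 ≠ 0 ∨ dot v b3 ≠ 0 := by
  by_contra! h
  obtain ⟨h1, h2, h3⟩ := h
  simp only [dot_expand] at h1 h2 h3
  refine hv (funext fun j => (mul_eq_zero.1 ?_).resolve_left hdet)
  fin_cases j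
  · show det3 b1 b2 b3 * v 0 = 0
    rw [det3_expand]
    linear_combination (b2 1 * b3 2 - b2 2 * b3 1) * h1 + (b3 1 * b1 2 - b3 2 * b1 1) * h2
        + (b1 1 * b2 2 - b1 2 * b2 1) * h3
  · show det3 b1 b2 b3 * v 1 = 0
    rw [det3_expand]
    linear_combination (b2 2 * b3 0 - b2 0 * b3 2) * h1 + (b3 2 * b1 0 - b3 0 * b1 2) * h2
        + (b1 2 * b2 0 - b1 0 * b2 2) * h3
  · show det3 b1 b2 b3 * v 2 = 0
    rw [det3_expand]
    linear_combination (b2 0 * b3 1 - b2 1 * b3 0) * h1 + (b3 0 * b1 1 - b3 1 * b1 0) * h2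
        + (b1 0 * b2 1 - b1 1 * b2 0) * h3

lemma dot_self_of_mem_PhiR {u : R3} (hu : u ∈ PhiR) : dot u u = 1 := by
  rcases hu with ⟨i, rfl | rfl⟩ <;> simp [dot_neg_left, dot_neg_right, stdR_dot, stdR]

lemma eq_or_eq_neg_of_dot_ne_zero {u v : R3} (hu : u ∈ PhiR) (hv : v ∈ PhiR) (h : dot u v ≠ 0) :
    u = v ∨ u = -v := by
  obtain ⟨i, hu⟩ := hu
  obtain ⟨j, hv⟩ := hv
  obtain rfl | hij := eq_or_ne i j
  · rcases hu with rfl | rfl <;> rcases hv with rfl | rfl <;> simp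
  · refine absurd ?_ h
    rcases hu with rfl | rfl <;> rcases hv with rfl | rfl <;>
      simp [dot_neg_left, dot_neg_right, stdR_dot, stdR, hij]

lemma dot_eq_zero_of_det3_ne_zero {u v w : R3} (hu : u ∈ PhiR) (hv : v ∈ PhiR)
    (h : det3 u v w ≠ 0) : dot u v = 0 := by
  by_contra huv
  refine h ?_
  rcases eq_or_eq_neg_of_dot_ne_zero hu hv huv with rfl | rfl <;>
    simp only [det3_expand, Pi.neg_apply] <;> ring

lemma exists_int_dot_of_mem_PhiR (z : Fin 3 → ℤ) {u : R3} (hu : u ∈ PhiR) :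
    ∃ m : ℤ, dot (fun i => (z i : ℝ)) u = m := by
  rcases hu with ⟨i, rfl | rfl⟩
  · exact ⟨z i, dot_stdR _ i⟩
  · exact ⟨-z i, by rw [dot_neg_right, dot_stdR, Int.cast_neg]⟩

lemma mem_PhiR_of_sum_abs_eq_one (z : Fin 3 → ℤ) (hz : ∑ i, |z i| = 1) :
    (fun i => (z i : ℝ)) ∈ PhiR := by
  rw [Fin.sum_univ_three] at hz
  have hz' : ((z 0 = 1 ∨ z 0 = -1) ∧ z 1 = 0 ∧ z 2 = 0) ∨ (z 0 = 0 ∧ (z 1 = 1 ∨ z 1 = -1) ∧ z 2 = 0)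
      ∨ (z 0 = 0 ∧ z 1 = 0 ∧ (z 2 = 1 ∨ z 2 = -1)) := by
    rcases abs_cases (z 0) with ⟨h0, _⟩ | ⟨h0, _⟩ <;>
      rcases abs_cases (z 1) with ⟨h1, _⟩ | ⟨h1, _⟩ <;>
      rcases abs_cases (z 2) with ⟨h2, _⟩ | ⟨h2, _⟩ <;> omega
  rcases hz' with ⟨h0 | h0, h1, h2⟩ | ⟨h0, h1 | h1, h2⟩ | ⟨h0, h1, h2 | h2⟩
  · exact ⟨0, Or.inl (funext fun j => by fin_cases j <;> simp [stdR, h0, h1, h2])⟩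
  · exact ⟨0, Or.inr (funext fun j => by fin_cases j <;> simp [stdR, h0, h1, h2])⟩
  · exact ⟨1, Or.inl (funext fun j => by fin_cases j <;> simp [stdR, h0, h1, h2])⟩
  · exact ⟨1, Or.inr (funext fun j => by fin_cases j <;> simp [stdR, h0, h1, h2])⟩
  · exact ⟨2, Or.inl (funext fun j => by fin_cases j <;> simp [stdR, h0, h1, h2])⟩
  · exact ⟨2, Or.inr (funext fun j => by fin_cases j <;> simp [stdR, h0, h1, h2])⟩

def slantDir (b1 b2 b3 : R3) (a b : ℝ) : R3 := b3 + a • b1 + b • b2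

section SlantedProjection

variable {b1 b2 b3 : R3} {a b : ℝ}

lemma projSl_eq_sub (x : R3) :
    projSl b1 b2 b3 a b x = x - dot x b3 • slantDir b1 b2 b3 a b := by
  funext i
  simp only [projSl, slantDir, Pi.sub_apply, Pi.add_apply, Pi.smul_apply, smul_eq_mul]

lemma projSl_eq_projSl_iff {x y : R3} :
    projSl b1 b2 b3 a b x = projSl b1 b2 b3 a b y ↔
      x - y = (dot x b3 - dot y b3) • slantDir b1 b2 b3 a b := by
  rw [projSl_eq_sub, projSl_eq_sub, sub_eq_sub_iff_sub_eq_sub, sub_smul]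

lemma eq_of_projSl_eq_of_abs_lt {u x y : R3} {α N : ℝ}
    (hwu : dot (slantDir b1 b2 b3 a b) u = α) (hα0 : α ≠ 0) (hα : |α| < 1 / N)
    (hint : ∃ m : ℤ, dot (x - y) u = m) (hN : |dot x b3 - dot y b3| ≤ N)
    (h : projSl b1 b2 b3 a b x = projSl b1 b2 b3 a b y) : x = y := by
  have hxy := projSl_eq_projSl_iff.1 h
  obtain ⟨m, hm⟩ := hint
  have hmt : (m : ℝ) = (dot x b3 - dot y b3) * α := by
    rw [← hm, hxy, dot_smul_left, hwu]
  have hN0 : 0 < N := by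
    by_contra hN0
    linarith [abs_nonneg α, one_div_nonpos.2 (not_lt.1 hN0)]
  have hm1 : |(m : ℝ)| < 1 := by
    rw [hmt, abs_mul]
    calc |dot x b3 - dot y b3| * |α| ≤ N * |α| := by gcongr
      _ < 1 := by rwa [lt_div_iff₀ hN0, mul_comm] at hα
  have hm0 : m = 0 := by
    rwa [← Int.cast_abs, ← Int.cast_one, Int.cast_lt, Int.abs_lt_one_iff] at hm1
  rw [hm0, Int.cast_zero, eq_comm, mul_eq_zero, or_iff_left hα0] at hmt
  rw [← sub_eq_zero, hxy, hmt, zero_smul]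

end SlantedProjection

section LatticeBasis

variable {b1 b2 b3 : R3}

lemma IsLatticeBasis.orthogonal (hβ : IsLatticeBasis b1 b2 b3) :
    dot b1 b2 = 0 ∧ dot b1 b3 = 0 ∧ dot b2 b3 = 0 := by
  obtain ⟨h1, h2, h3, hdet⟩ := hβ
  refine ⟨dot_eq_zero_of_det3_ne_zero h1 h2 (w := b3) ?_,
    dot_eq_zero_of_det3_ne_zero h1 h3 (w := b2) ?_, dot_eq_zero_of_det3_ne_zero h2 h3 (w := b1) ?_⟩
  · rw [hdet]; norm_num
  · rw [det3_swap_right, hdet]; norm_num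
  · rw [det3_rotate, hdet]; norm_num

lemma IsLatticeBasis.slantDir_dot (hβ : IsLatticeBasis b1 b2 b3) (a b : ℝ) :
    dot (slantDir b1 b2 b3 a b) b1 = a ∧ dot (slantDir b1 b2 b3 a b) b2 = b ∧
      dot (slantDir b1 b2 b3 a b) b3 = 1 := by
  obtain ⟨h12, h13, h23⟩ := hβ.orthogonal
  simp only [slantDir, dot_add_left, dot_smul_left, dot_self_of_mem_PhiR hβ.1,
    dot_self_of_mem_PhiR hβ.2.1, dot_self_of_mem_PhiR hβ.2.2.1, dot_comm b2 b1, dot_comm b3 b1,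
    dot_comm b3 b2, h12, h13, h23]
  norm_num

lemma IsLatticeBasis.eq_or_eq_neg (hβ : IsLatticeBasis b1 b2 b3) {v : R3} (hv : v ∈ PhiR) :
    (v = b1 ∨ v = -b1) ∨ (v = b2 ∨ v = -b2) ∨ (v = b3 ∨ v = -b3) := by
  have hv0 : v ≠ 0 := fun h => by simpa [h, dot] using dot_self_of_mem_PhiR hv
  obtain ⟨h1, h2, h3, hdet⟩ := hβ
  rcases exists_dot_ne_zero_of_det3_ne_zero (by rw [hdet]; norm_num) hv0 with h | h | h
  · exact Or.inl (eq_or_eq_neg_of_dot_ne_zero hv h1 h)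
  · exact Or.inr (Or.inl (eq_or_eq_neg_of_dot_ne_zero hv h2 h))
  · exact Or.inr (Or.inr (eq_or_eq_neg_of_dot_ne_zero hv h3 h))

lemma IsLatticeBasis.dot_trichotomy (hβ : IsLatticeBasis b1 b2 b3) {v0 v1 : R3}
    (hv0 : v0 ∈ PhiR) (hv1 : v1 ∈ PhiR) :
    (dot v0 b1 = 0 ∧ dot v1 b1 = 0) ∨ (dot v0 b2 = 0 ∧ dot v1 b2 = 0) ∨
      (dot v0 b3 = 0 ∧ dot v1 b3 = 0 ∧ (det3 v1 v0 b3 = -1 ∨ det3 v1 v0 b3 = 1)) := by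
  obtain ⟨h12, h13, h23⟩ := hβ.orthogonal
  have h21 : dot b2 b1 = 0 := by rw [dot_comm, h12]
  have h31 : dot b3 b1 = 0 := by rw [dot_comm, h13]
  have h32 : dot b3 b2 = 0 := by rw [dot_comm, h23]
  have h213 : det3 b2 b1 b3 = -1 := by rw [det3_swap_left, hβ.2.2.2]
  have hunit := And.intro (dot_self_of_mem_PhiR hβ.1)
    (And.intro (dot_self_of_mem_PhiR hβ.2.1) (dot_self_of_mem_PhiR hβ.2.2.1))
  rcases hβ.eq_or_eq_neg hv0 with (rfl | rfl) | (rfl | rfl) | (rfl | rfl) <;>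
    rcases hβ.eq_or_eq_neg hv1 with (rfl | rfl) | (rfl | rfl) | (rfl | rfl) <;>
    simp [dot_neg_left, det3_neg_left, det3_neg_mid, h12, h13, h23, h21, h31, h32, h213,
      hβ.2.2.2, hunit]

end LatticeBasis

lemma RSeg.pt_eq (l : RSeg) (s : ℝ) : l.pt s = l.p + s • l.v := rfl

lemma RSeg.dot_pt (l : RSeg) (s : ℝ) (u : R3) :
    dot (l.pt s) u = dot (l.pt 0) u + s * dot l.v u := by
  simp [RSeg.pt_eq, dot_add_left, dot_smul_left]

def ProjectionsMeet (b1 b2 b3 : R3) (a b : ℝ) (l0 l1 : RSeg) : Prop :=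
  ∃ s0 ∈ Icc (0:ℝ) 1, ∃ s1 ∈ Icc (0:ℝ) 1,
    projSl b1 b2 b3 a b (l0.pt s0) = projSl b1 b2 b3 a b (l1.pt s1)

def SlantedEffectDetectsCrossings (b1 b2 b3 : R3) (a b : ℝ) (l0 l1 : RSeg) : Prop :=
  (tauSl b1 b2 b3 a b l0 l1 + tauSl b1 b2 b3 a b l1 l0 ≠ 0 ↔
      ∃ s0 ∈ Icc (0:ℝ) 1, ∃ s1 ∈ Icc (0:ℝ) 1,
        l0.pt s0 ≠ l1.pt s1 ∧
        projSl b1 b2 b3 a b (l0.pt s0) = projSl b1 b2 b3 a b (l1.pt s1)) ∧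
    (∀ s0 ∈ Icc (0:ℝ) 1, ∀ s1 ∈ Icc (0:ℝ) 1,
        l0.pt s0 ≠ l1.pt s1 →
        projSl b1 b2 b3 a b (l0.pt s0) = projSl b1 b2 b3 a b (l1.pt s1) →
        det3 l1.v l0.v (l1.pt s1 - l0.pt s0) ≠ 0 ∧
        Real.sign (det3 l1.v l0.v (l1.pt s1 - l0.pt s0))
          = tauSl b1 b2 b3 a b l0 l1 + tauSl b1 b2 b3 a b l1 l0)

section SlantedEffect

variable {b1 b2 b3 : R3} {a b : ℝ} {l0 l1 : RSeg}

lemma ProjectionsMeet.symm (h : ProjectionsMeet b1 b2 b3 a b l0 l1) :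
    ProjectionsMeet b1 b2 b3 a b l1 l0 := by
  obtain ⟨s0, hs0, s1, hs1, h⟩ := h
  exact ⟨s1, hs1, s0, hs0, h.symm⟩

lemma tauSl_add_tauSl :
    tauSl b1 b2 b3 a b l0 l1 + tauSl b1 b2 b3 a b l1 l0 =
      open scoped Classical in
      if ProjectionsMeet b1 b2 b3 a b l0 l1 then
        det3 l1.v l0.v b3 * Real.sign (dot (l1.pt 0) b3 - dot (l0.pt 0) b3)
      else 0 := by
  by_cases hP : ProjectionsMeet b1 b2 b3 a b l0 l1
  · rw [if_pos hP]
    rcases lt_trichotomy (dot (l0.pt 0) b3) (dot (l1.pt 0) b3) with h | h | h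
    · rw [tauSl, if_pos ⟨hP, h⟩, tauSl, if_neg (fun h' => h'.2.not_gt h),
        Real.sign_of_pos (sub_pos.2 h)]
      ring
    · rw [tauSl, if_neg (fun h' => h'.2.ne h), tauSl, if_neg (fun h' => h'.2.ne h.symm), h,
        sub_self, Real.sign_zero]
      ring
    · rw [tauSl, if_neg (fun h' => h'.2.not_gt h), tauSl, if_pos ⟨hP.symm, h⟩,
        Real.sign_of_neg (sub_neg.2 h), det3_swap_left]
      ring
  · rw [if_neg hP, tauSl, if_neg (fun h' => hP h'.1), tauSl,
      if_neg (fun h' => hP (ProjectionsMeet.symm h'.1))]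
    ring

/-- Works because, by `tauSl_add_tauSl`, the symmetrized effect is the sign of
`det3 l1.v l0.v b3 * (H1 - H0)` (with `Hi` the `b3`-height of `li`) once the projections meet. -/
lemma slantedEffectDetectsCrossings_of_det_eq
    (hD : det3 l1.v l0.v b3 = -1 ∨ det3 l1.v l0.v b3 = 0 ∨ det3 l1.v l0.v b3 = 1)
    (hdet : ∀ s0 ∈ Icc (0:ℝ) 1, ∀ s1 ∈ Icc (0:ℝ) 1,
      projSl b1 b2 b3 a b (l0.pt s0) = projSl b1 b2 b3 a b (l1.pt s1) →
      det3 l1.v l0.v (l1.pt s1 - l0.pt s0)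
        = det3 l1.v l0.v b3 * (dot (l1.pt 0) b3 - dot (l0.pt 0) b3))
    (hne : ∀ s0 ∈ Icc (0:ℝ) 1, ∀ s1 ∈ Icc (0:ℝ) 1,
      projSl b1 b2 b3 a b (l0.pt s0) = projSl b1 b2 b3 a b (l1.pt s1) →
      (l0.pt s0 ≠ l1.pt s1 ↔ det3 l1.v l0.v b3 * (dot (l1.pt 0) b3 - dot (l0.pt 0) b3) ≠ 0)) :
    SlantedEffectDetectsCrossings b1 b2 b3 a b l0 l1 := by
  have hsign : ∀ t : ℝ, Real.sign (det3 l1.v l0.v b3 * t) = det3 l1.v l0.v b3 * Real.sign t :=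
    fun t => by rcases hD with hD | hD | hD <;> simp [hD, Real.sign_neg]
  have hsign_ne : ∀ t : ℝ, det3 l1.v l0.v b3 * Real.sign t ≠ 0 ↔ det3 l1.v l0.v b3 * t ≠ 0 :=
    fun t => by rw [← hsign, Ne, Real.sign_eq_zero_iff]
  rw [SlantedEffectDetectsCrossings, tauSl_add_tauSl]
  refine ⟨⟨fun h => ?_, ?_⟩, ?_⟩
  · split_ifs at h with hP
    · obtain ⟨s0, hs0, s1, hs1, hproj⟩ := hP
      exact ⟨s0, hs0, s1, hs1, (hne s0 hs0 s1 hs1 hproj).2 ((hsign_ne _).1 h), hproj⟩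
    · exact absurd rfl h
  · rintro ⟨s0, hs0, s1, hs1, hpt, hproj⟩
    rw [if_pos ⟨s0, hs0, s1, hs1, hproj⟩, hsign_ne]
    exact (hne s0 hs0 s1 hs1 hproj).1 hpt
  · intro s0 hs0 s1 hs1 hpt hproj
    rw [hdet s0 hs0 s1 hs1 hproj, if_pos ⟨s0, hs0, s1, hs1, hproj⟩, hsign]
    exact ⟨(hne s0 hs0 s1 hs1 hproj).1 hpt, rfl⟩

lemma slantedEffectDetectsCrossings_of_horizontal
    (hb3 : dot b3 b3 = 1) (hw : dot (slantDir b1 b2 b3 a b) b3 = 1)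
    (h0 : dot l0.v b3 = 0) (h1 : dot l1.v b3 = 0)
    (hD : det3 l1.v l0.v b3 = -1 ∨ det3 l1.v l0.v b3 = 1) :
    SlantedEffectDetectsCrossings b1 b2 b3 a b l0 l1 := by
  have hdiff : ∀ s0 s1, projSl b1 b2 b3 a b (l0.pt s0) = projSl b1 b2 b3 a b (l1.pt s1) →
      l1.pt s1 - l0.pt s0 = (dot (l1.pt 0) b3 - dot (l0.pt 0) b3) • slantDir b1 b2 b3 a b := by
    intro s0 s1 h
    rw [projSl_eq_projSl_iff.1 h.symm, RSeg.dot_pt l0 s0, RSeg.dot_pt l1 s1, h0, h1]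
    simp only [mul_zero, add_zero]
  have hD0 : det3 l1.v l0.v b3 ≠ 0 := by rcases hD with hD | hD <;> norm_num [hD]
  have hw0 : slantDir b1 b2 b3 a b ≠ 0 := fun hw0 => by simp [hw0, dot] at hw
  apply slantedEffectDetectsCrossings_of_det_eq (by tauto)
  · intro s0 _ s1 _ h
    rw [det3_eq_mul_dot_of_orthogonal hb3 h1 h0, hdiff s0 s1 h, dot_smul_left, hw, mul_one]
  · intro s0 _ s1 _ h
    rw [ne_comm, ← sub_ne_zero, hdiff s0 s1 h, smul_ne_zero_iff, mul_ne_zero_iff]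
    simp [hD0, hw0]

lemma slantedEffectDetectsCrossings_of_orthogonal {u : R3}
    (hu : dot u u = 1) (h0 : dot l0.v u = 0) (h1 : dot l1.v u = 0) (h3 : dot b3 u = 0)
    (heq : ∀ s0 ∈ Icc (0:ℝ) 1, ∀ s1 ∈ Icc (0:ℝ) 1,
      projSl b1 b2 b3 a b (l0.pt s0) = projSl b1 b2 b3 a b (l1.pt s1) → l0.pt s0 = l1.pt s1) :
    SlantedEffectDetectsCrossings b1 b2 b3 a b l0 l1 := by
  have hD : det3 l1.v l0.v b3 = 0 := by
    rw [det3_eq_mul_dot_of_orthogonal hu h1 h0, h3, mul_zero]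
  apply slantedEffectDetectsCrossings_of_det_eq (Or.inr (Or.inl hD))
  · intro s0 hs0 s1 hs1 h
    rw [heq s0 hs0 s1 hs1 h, sub_self, det3_zero_right, hD, zero_mul]
  · intro s0 hs0 s1 hs1 h
    simp [heq s0 hs0 s1 hs1 h, hD]

end SlantedEffect

lemma abs_add_mul_sub_sub_le {A B c N s : ℝ} (hs : s ∈ Icc (0:ℝ) 1) (hA : |A - c| ≤ N)
    (hB : |B - c| ≤ N) : |A + s * (B - A) - c| ≤ N := by
  obtain ⟨hs0, hs1⟩ := hs
  rw [abs_le] at *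
  constructor <;> nlinarith [mul_le_mul_of_nonneg_left hA.1 (sub_nonneg.2 hs1),
    mul_le_mul_of_nonneg_left hA.2 (sub_nonneg.2 hs1), mul_le_mul_of_nonneg_left hB.1 hs0,
    mul_le_mul_of_nonneg_left hB.2 hs0]

namespace Seg

lemma vec_mem_PhiR (l : Seg) : l.vec ∈ PhiR := by
  have hvec : l.vec = fun i => ((l.b - l.a) i : ℝ) := by
    funext i
    simp [Seg.vec]
  rw [hvec]
  exact mem_PhiR_of_sum_abs_eq_one (l.b - l.a) (by simpa [abs_sub_comm] using l.adj)

lemma dot_pt (l : Seg) (s : ℝ) (u : R3) : dot (l.pt s) u =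
    dot (cubeCenter l.a) u + s * (dot (cubeCenter l.b) u - dot (cubeCenter l.a) u) := by
  simp only [dot_expand, Seg.pt, cubeCenter]
  ring

lemma exists_int_dot_pt_sub_pt {u : R3} (hu : u ∈ PhiR) {l0 l1 : Seg}
    (h0 : dot l0.vec u = 0) (h1 : dot l1.vec u = 0) (s0 s1 : ℝ) :
    ∃ m : ℤ, dot (l0.pt s0 - l1.pt s1) u = m := by
  have hpt : l0.pt s0 - l1.pt s1
      = (fun i => ((l0.a - l1.a) i : ℝ)) + s0 • l0.vec - s1 • l1.vec := by
    funext i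
    simp only [Seg.pt, Seg.vec, cubeCenter, Pi.sub_apply, Pi.add_apply, Pi.smul_apply,
      smul_eq_mul, Int.cast_sub]
    ring
  obtain ⟨m, hm⟩ := exists_int_dot_of_mem_PhiR (l0.a - l1.a) hu
  refine ⟨m, ?_⟩
  rw [hpt, dot_sub_left, dot_add_left, dot_smul_left, dot_smul_left, h0, h1, hm]
  ring

lemma abs_dot_pt_sub_pt_le {R : Finset (Fin 3 → ℤ)} {u : R3} {N : ℝ}
    (hN : ∀ p ∈ R, ∀ q ∈ R, |dot (cubeCenter p) u - dot (cubeCenter q) u| ≤ N)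
    {l0 l1 : Seg} (h0 : l0.inRegion R) (h1 : l1.inRegion R) {s0 s1 : ℝ}
    (hs0 : s0 ∈ Icc (0:ℝ) 1) (hs1 : s1 ∈ Icc (0:ℝ) 1) :
    |dot (l0.pt s0) u - dot (l1.pt s1) u| ≤ N := by
  have hl0 : ∀ q ∈ R, |dot (l0.pt s0) u - dot (cubeCenter q) u| ≤ N := fun q hq => by
    rw [dot_pt]
    exact abs_add_mul_sub_sub_le hs0 (hN _ h0.1 q hq) (hN _ h0.2 q hq)
  rw [abs_sub_comm, dot_pt]
  exact abs_add_mul_sub_sub_le hs1 (by rw [abs_sub_comm]; exact hl0 _ h1.1)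
    (by rw [abs_sub_comm]; exact hl0 _ h1.2)

end Seg

theorem statement6 (b1 b2 b3 : R3) (hβ : IsLatticeBasis b1 b2 b3)
    (R : Finset (Fin 3 → ℤ)) (N : ℝ)
    (hN : ∀ p ∈ R, ∀ q ∈ R, |dot (cubeCenter p) b3 - dot (cubeCenter q) b3| ≤ N)
    (a b : ℝ) (ha0 : a ≠ 0) (ha : |a| < 1/N) (hb0 : b ≠ 0) (hb : |b| < 1/N)
    (l0 l1 : Seg) (h0 : l0.inRegion R) (h1 : l1.inRegion R) :
    (tauSl b1 b2 b3 a b l0.toR l1.toR + tauSl b1 b2 b3 a b l1.toR l0.toR ≠ 0 ↔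
      ∃ s0 ∈ Set.Icc (0:ℝ) 1, ∃ s1 ∈ Set.Icc (0:ℝ) 1,
        l0.pt s0 ≠ l1.pt s1 ∧
        projSl b1 b2 b3 a b (l0.pt s0) = projSl b1 b2 b3 a b (l1.pt s1)) ∧
    (∀ s0 ∈ Set.Icc (0:ℝ) 1, ∀ s1 ∈ Set.Icc (0:ℝ) 1,
        l0.pt s0 ≠ l1.pt s1 →
        projSl b1 b2 b3 a b (l0.pt s0) = projSl b1 b2 b3 a b (l1.pt s1) →
        det3 l1.vec l0.vec (l1.pt s1 - l0.pt s0) ≠ 0 ∧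
        Real.sign (det3 l1.vec l0.vec (l1.pt s1 - l0.pt s0))
          = tauSl b1 b2 b3 a b l0.toR l1.toR + tauSl b1 b2 b3 a b l1.toR l0.toR) := by
  obtain ⟨hw1, hw2, hw3⟩ := hβ.slantDir_dot a b
  obtain ⟨-, h13, h23⟩ := hβ.orthogonal
  have hno_crossing : ∀ u α, u ∈ PhiR → dot (slantDir b1 b2 b3 a b) u = α → α ≠ 0 →
      |α| < 1 / N → dot l0.vec u = 0 → dot l1.vec u = 0 →
      ∀ s0 ∈ Icc (0:ℝ) 1, ∀ s1 ∈ Icc (0:ℝ) 1,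
        projSl b1 b2 b3 a b (l0.pt s0) = projSl b1 b2 b3 a b (l1.pt s1) → l0.pt s0 = l1.pt s1 :=
    fun u α hu hwu hα0 hα hu0 hu1 s0 hs0 s1 hs1 =>
      eq_of_projSl_eq_of_abs_lt hwu hα0 hα (Seg.exists_int_dot_pt_sub_pt hu hu0 hu1 s0 s1)
        (Seg.abs_dot_pt_sub_pt_le hN h0 h1 hs0 hs1)
  rcases hβ.dot_trichotomy l0.vec_mem_PhiR l1.vec_mem_PhiR with
    ⟨hv0, hv1⟩ | ⟨hv0, hv1⟩ | ⟨hv0, hv1, hD⟩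
  · exact slantedEffectDetectsCrossings_of_orthogonal (dot_self_of_mem_PhiR hβ.1) hv0 hv1
      (by rw [dot_comm, h13]) (hno_crossing b1 a hβ.1 hw1 ha0 ha hv0 hv1)
  · exact slantedEffectDetectsCrossings_of_orthogonal (dot_self_of_mem_PhiR hβ.2.1) hv0 hv1
      (by rw [dot_comm, h23]) (hno_crossing b2 b hβ.2.1 hw2 hb0 hb hv0 hv1)
  · exact slantedEffectDetectsCrossings_of_horizontal (dot_self_of_mem_PhiR hβ.2.2.1) hw3 hv0 hv1 hD
end
end
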